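/- arXiv:math/0311076 — 2 statements merged into one kernel-verified Lean document; each statement's English description precedes it below -/
import Mathlib

section
/- Let M be a Coxeter matrix on a type S with associated Coxeter system (W, cs), and let (w_1, …, w_r) be a word in S such that some s ∈ S appears exactly once among its letters. Set w = cs.simple w_1 · … · cs.simple w_r ∈ W. Then every reduced expression (t_1, …, t_l) for w contains the letter s, i.e., there exists j ∈ {1, …, l} with t_j = s. -/
/-!
In the geometric representation of `W` on `ℂ^(B)`, every simple reflection `σᵢ` with `i ≠ s`
fixes the `s`-coordinate, while `σₛ eₛ = -eₛ`, so `cs.simple s` is not a product of the other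
simple reflections. But if `t` avoided `s`, then writing `l = a ++ s :: b` would give
`cs.simple s = π(a.reverse ++ t ++ b.reverse)`.

The Coxeter relations hold in this representation because `σᵢσⱼ` has the eigenvectors
`eᵢ + q^{∓1} eⱼ` with eigenvalues `q^{±2}`, primitive `m`-th roots of unity (`q = exp(πi/m)`), so
`∑_{k<m} (σᵢσⱼ)^k` kills `span(eᵢ, eⱼ)`, which contains the image of `σᵢσⱼ - 1`.
-/

open Module Finset

section Dihedral

variable {K V : Type*} [Field K] [AddCommGroup V] [Module K V] {e₁ e₂ : V} {f₁ f₂ : Dual K V}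
  {q : K}

lemma preReflection_mul_preReflection_apply_add_inv_smul (hq : q ≠ 0) (h₁ : f₁ e₁ = 2)
    (h₂ : f₂ e₂ = 2) (h₁₂ : f₁ e₂ = -(q + q⁻¹)) (h₂₁ : f₂ e₁ = -(q + q⁻¹)) :
    (preReflection e₁ f₁ * preReflection e₂ f₂) (e₁ + q⁻¹ • e₂) = q ^ 2 • (e₁ + q⁻¹ • e₂) := by
  simp only [Module.End.mul_apply, preReflection_apply, map_add, map_sub, map_smul, h₁, h₂, h₁₂,
    h₂₁]
  match_scalars <;> field_simp <;> ring

lemma sum_pow_apply_eq_zero_of_apply_eq_smul {T : End K V} {μ : K} {m : ℕ}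
    (hμ : IsPrimitiveRoot μ m) (hm : 1 < m) {u : V} (hu : T u = μ • u) :
    (∑ i ∈ range m, T ^ i) u = 0 := by
  have hpow (i : ℕ) : (T ^ i) u = μ ^ i • u := by
    induction i with
    | zero => simp
    | succ i ih => rw [pow_succ', Module.End.mul_apply, ih, map_smul, hu, smul_smul, ← pow_succ]
  simp only [LinearMap.sum_apply, hpow, ← Finset.sum_smul, hμ.geom_sum_eq_zero hm, zero_smul]

theorem preReflection_mul_preReflection_pow_eq_one {m : ℕ} (hq : IsPrimitiveRoot (q ^ 2) m)
    (hm : 1 < m) (h₁ : f₁ e₁ = 2) (h₂ : f₂ e₂ = 2) (h₁₂ : f₁ e₂ = -(q + q⁻¹))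
    (h₂₁ : f₂ e₁ = -(q + q⁻¹)) :
    (preReflection e₁ f₁ * preReflection e₂ f₂) ^ m = 1 := by
  set T := preReflection e₁ f₁ * preReflection e₂ f₂
  set G := ∑ i ∈ range m, T ^ i
  have hq₀ : q ≠ 0 := by
    rintro rfl
    exact hq.ne_zero (by omega) (by simp)
  have hqq : q - q⁻¹ ≠ 0 := by
    intro h
    apply hq.ne_one hm
    field_simp at h
    linear_combination h
  have hu₁ : G (e₁ + q⁻¹ • e₂) = 0 :=
    sum_pow_apply_eq_zero_of_apply_eq_smul hq hm
      (preReflection_mul_preReflection_apply_add_inv_smul hq₀ h₁ h₂ h₁₂ h₂₁)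
  have hu₂ : G (e₁ + q • e₂) = 0 := by
    have := sum_pow_apply_eq_zero_of_apply_eq_smul (by simpa [inv_pow] using hq.inv) hm
      (preReflection_mul_preReflection_apply_add_inv_smul (q := q⁻¹) (inv_ne_zero hq₀) h₁ h₂
        (by rw [h₁₂, inv_inv, add_comm]) (by rw [h₂₁, inv_inv, add_comm]))
    rwa [inv_inv] at this
  have he₁ : G e₁ = 0 := by
    have : (q - q⁻¹) • e₁ = q • (e₁ + q⁻¹ • e₂) - q⁻¹ • (e₁ + q • e₂) := by
      rw [smul_add, smul_add, smul_smul, smul_smul, mul_inv_cancel₀ hq₀, inv_mul_cancel₀ hq₀,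
        sub_smul]
      abel
    have h := congrArg G this
    rw [map_smul, map_sub, map_smul, map_smul, hu₁, hu₂, smul_zero, smul_zero, sub_zero] at h
    exact (smul_eq_zero.mp h).resolve_left hqq
  have he₂ : G e₂ = 0 := by
    have : (q - q⁻¹) • e₂ = (e₁ + q • e₂) - (e₁ + q⁻¹ • e₂) := by
      rw [sub_smul]; abel
    have h := congrArg G this
    rw [map_smul, map_sub, hu₁, hu₂, sub_zero] at h
    exact (smul_eq_zero.mp h).resolve_left hqq
  rw [← sub_eq_zero, ← geom_sum_mul]
  ext x
  have hT : (T - 1) x = (f₂ x * f₁ e₂ - f₁ x) • e₁ - f₂ x • e₂ := by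
    simp only [T, LinearMap.sub_apply, Module.End.mul_apply, preReflection_apply, map_sub,
      map_smul, Module.End.one_apply]
    module
  rw [Module.End.mul_apply, hT, map_sub, map_smul, map_smul, he₁, he₂]
  simp

end Dihedral

namespace CoxeterMatrix

open Complex Finsupp

variable {B : Type*} (M : CoxeterMatrix B)

noncomputable def expAngle (i j : B) : ℂ := exp (Real.pi * I / M i j)

/-- With `q = exp(πi/mᵢⱼ)`, the pairing `-(q + q⁻¹) = -2 cos(π/mᵢⱼ)` is that of the geometric
representation; for `M i j = 0` (`mᵢⱼ = ∞`) division by zero gives `q = 1` and the usual `-2`. -/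
noncomputable def geomCoroot (j : B) : Dual ℂ (B →₀ ℂ) :=
  linearCombination ℂ fun i => -(M.expAngle i j + (M.expAngle i j)⁻¹)

noncomputable def geomReflection (i : B) : End ℂ (B →₀ ℂ) :=
  preReflection (single i 1) (M.geomCoroot i)

lemma expAngle_symm (i j : B) : M.expAngle i j = M.expAngle j i := by
  rw [expAngle, expAngle, M.symmetric]

lemma geomCoroot_single (i j : B) :
    M.geomCoroot j (single i 1) = -(M.expAngle i j + (M.expAngle i j)⁻¹) := by
  rw [geomCoroot, linearCombination_single, one_smul]

lemma geomCoroot_single_self (i : B) : M.geomCoroot i (single i 1) = 2 := by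
  rw [geomCoroot_single, expAngle, M.diagonal, Nat.cast_one, div_one, exp_pi_mul_I]
  norm_num

lemma isPrimitiveRoot_expAngle_sq {i j : B} (h : M i j ≠ 0) :
    IsPrimitiveRoot (M.expAngle i j ^ 2) (M i j) := by
  rw [expAngle, ← exp_nat_mul]
  convert isPrimitiveRoot_exp (M i j) h using 2
  push_cast
  ring

lemma isLiftable_geomReflection : M.IsLiftable M.geomReflection := by
  intro i j
  by_cases hij : i = j
  · subst hij
    rw [M.diagonal, pow_one]
    exact LinearMap.ext fun x => involutive_preReflection (M.geomCoroot_single_self i) x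
  rcases Nat.eq_zero_or_pos (M i j) with h0 | hpos
  · rw [h0, pow_zero]
  exact preReflection_mul_preReflection_pow_eq_one (M.isPrimitiveRoot_expAngle_sq hpos.ne')
    (by have := M.off_diagonal i j hij; omega) (M.geomCoroot_single_self i)
    (M.geomCoroot_single_self j) (by rw [geomCoroot_single, expAngle_symm])
    (geomCoroot_single ..)

lemma geomReflection_apply_of_ne {i s : B} (h : i ≠ s) (x : B →₀ ℂ) :
    M.geomReflection i x s = x s := by
  simp [geomReflection, preReflection_apply, single_eq_of_ne' h]

lemma geomReflection_single_self (s : B) :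
    M.geomReflection s (single s 1) = -single s 1 :=
  preReflection_apply_self (M.geomCoroot_single_self s)

end CoxeterMatrix

namespace CoxeterSystem

variable {B W : Type*} [Group W] {M : CoxeterMatrix B} (cs : CoxeterSystem M W)

theorem wordProd_ne_simple_of_notMem {ω : List B} {s : B} (h : s ∉ ω) :
    cs.wordProd ω ≠ cs.simple s := by
  set ρ := cs.lift ⟨M.geomReflection, M.isLiftable_geomReflection⟩
  have hρ (i : B) : ρ (cs.simple i) = M.geomReflection i := cs.lift_apply_simple _ i
  have hfix : ∀ ω : List B, s ∉ ω → ∀ x, ρ (cs.wordProd ω) x s = x s := by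
    intro ω
    induction ω with
    | nil => simp
    | cons i ω ih =>
      intro h x
      rw [List.mem_cons, not_or] at h
      rw [wordProd_cons, map_mul, Module.End.mul_apply, hρ,
        M.geomReflection_apply_of_ne (Ne.symm h.1), ih h.2]
  intro hω
  have := hfix ω h (Finsupp.single s 1)
  rw [hω, hρ, M.geomReflection_single_self] at this
  norm_num at this

end CoxeterSystem

theorem mem_reduced_word_of_count_eq_one_general {S : Type*} [DecidableEq S] {M : CoxeterMatrix S}
    {W : Type*} [Group W] (cs : CoxeterSystem M W)
    (l : List S) (s : S) (hcount : l.count s = 1)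
    (t : List S) (hprod : cs.wordProd t = cs.wordProd l) :
    s ∈ t := by
  obtain ⟨a, b, rfl⟩ := List.append_of_mem (List.count_pos_iff.mp (hcount ▸ one_pos))
  have hab : s ∉ a ∧ s ∉ b := by
    rw [List.count_append, List.count_cons_self] at hcount
    exact ⟨List.count_eq_zero.mp (by omega), List.count_eq_zero.mp (by omega)⟩
  by_contra hst
  apply cs.wordProd_ne_simple_of_notMem (ω := a.reverse ++ t ++ b.reverse) (s := s)
    (by simp [hab.1, hab.2, hst])
  rw [cs.wordProd_append, cs.wordProd_append, cs.wordProd_reverse, cs.wordProd_reverse, hprod,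
    cs.wordProd_append, cs.wordProd_cons]
  group

/-- Let `(W, cs)` be the Coxeter system of a Coxeter matrix `M` on `S`, and let `l` be a word
in which the letter `s` appears exactly once.  Then every reduced expression `t = (t₁, …, t_l)`
for the group element `cs.wordProd l` contains the letter `s`. -/
theorem mem_reduced_word_of_count_eq_one {S : Type*} [DecidableEq S] {M : CoxeterMatrix S}
    {W : Type*} [Group W] (cs : CoxeterSystem M W)
    (l : List S) (s : S) (hcount : l.count s = 1)
    (t : List S) (hred : cs.IsReduced t) (hprod : cs.wordProd t = cs.wordProd l) :
    s ∈ t :=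
  mem_reduced_word_of_count_eq_one_general cs l s hcount t hprod
end

section
/- Let M be a Coxeter matrix on a type S such that M s t ≥ 3 or M s t = 0 (encoding ∞) for all s ≠ t, with associated Coxeter system (W, cs). Let (w_1, …, w_r) be a word in S that defines a pair partition V of {1, …, r}. Then cs.simple w_1 · … · cs.simple w_r = 1 in W if and only if V is non-crossing. -/
/-!
Let `W` act on `V = S →₀ ℝ` by its geometric representation, with Tits form
`B(αₛ, αₜ) = -cos (π / m(s,t))`; the hypothesis on `M` says exactly that `B(αₛ, αₜ) < 0` for
`s ≠ t`. Deleting an adjacent pair `x x` from a pair word changes neither its product nor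
whether it is crossing, so both directions reduce to a word containing `x μ x` with `μ`
nonempty and made of distinct letters other than `x`. Such a word is crossing, since the first
letter of `μ` is paired outside `x μ x`; and its product is not `1`: after a cyclic rotation it
reads `x μ x ν` with `x ∉ ν`, and since `sₓ wμ sₓ = wν⁻¹` fixes the `αₓ`-coordinate of `αₓ`,
we would get `B(αₓ, wμ αₓ) = 1`. But `wμ αₓ - αₓ` is a nonzero vector with nonnegative
coordinates supported on `μ` (each new reflection adds a positive multiple of its root), so
`B(αₓ, wμ αₓ) < 1`.
-/

open Real

namespace Real

theorem cos_pi_div_natCast_pos {m : ℕ} (hm : m = 0 ∨ 3 ≤ m) : 0 < cos (π / m) := by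
  rcases hm with rfl | hm
  · simp
  · have hm' : (3 : ℝ) ≤ m := by exact_mod_cast hm
    have hpos : 0 < π / m := div_pos pi_pos (by linarith)
    refine cos_pos_of_mem_Ioo ⟨by linarith [pi_pos], ?_⟩
    rw [div_lt_iff₀ (by linarith)]
    nlinarith [pi_pos]

end Real

namespace Polynomial.Chebyshev

theorem S_eval_two_mul_cos_pi_div_eq_zero {k : ℕ} (hk : 2 ≤ k) :
    (S ℝ (k - 1)).eval (2 * cos (π / k)) = 0 := by
  have hk' : (1 : ℝ) < k := by exact_mod_cast hk
  have hsin : sin (π / k) ≠ 0 :=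
    (sin_pos_of_pos_of_lt_pi (by positivity) (div_lt_self pi_pos hk')).ne'
  have h := S_two_mul_real_cos (π / k) (k - 1)
  rw [show (((k - 1 : ℤ) : ℝ) + 1) * (π / k) = π by push_cast; field_simp; ring, sin_pi] at h
  exact (mul_eq_zero.1 h).resolve_right hsin

theorem S_add_S_sub_one_eval_two_mul_cos_eq_zero {k : ℕ} (hk : 1 ≤ k) :
    (S ℝ k).eval (2 * cos (2 * π / (2 * k + 1))) +
      (S ℝ (k - 1)).eval (2 * cos (2 * π / (2 * k + 1))) = 0 := by
  set θ := 2 * π / (2 * k + 1) with hθ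
  have hk' : (1 : ℝ) ≤ k := by exact_mod_cast hk
  have hsin : sin θ ≠ 0 := by
    refine (sin_pos_of_pos_of_lt_pi (by positivity) ?_).ne'
    rw [hθ, div_lt_iff₀ (by positivity)]
    nlinarith [pi_pos]
  have hsum : (k + 1) * θ = 2 * π - k * θ := by
    rw [hθ]; field_simp; ring
  apply mul_right_cancel₀ hsin
  rw [add_mul, S_two_mul_real_cos, S_two_mul_real_cos, zero_mul]
  push_cast
  rw [sub_add_cancel, hsum, sin_two_pi_sub, neg_add_cancel]

end Polynomial.Chebyshev

namespace Module

variable {V : Type*} [AddCommGroup V] [Module ℝ V] {x y : V} {f g : Dual ℝ V}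

open Polynomial.Chebyshev in
theorem reflection_mul_reflection_pow_eq_one (hf : f x = 2) (hg : g y = 2) {m : ℕ} (hm : 3 ≤ m)
    (hfg : f y * g x = 4 * cos (π / m) ^ 2) : (reflection hf * reflection hg) ^ m = 1 := by
  apply LinearEquiv.toLinearMap_injective
  rw [reflection_mul_reflection_pow hf hg m (2 * cos (2 * π / m))
    (by rw [hfg, mul_div_assoc, cos_two_mul]; ring)]
  obtain ⟨k, rfl | rfl⟩ := Nat.even_or_odd' m
  · have h := S_eval_two_mul_cos_pi_div_eq_zero (k := k) (by omega)
    rw [show 2 * π / ((2 * k : ℕ) : ℝ) = π / k by push_cast; field_simp]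
    push_cast
    rw [show (2 * (k : ℤ) - 2) / 2 = k - 1 by omega, show (2 * (k : ℤ) - 1) / 2 = k - 1 by omega]
    simp [h]
  · have h := S_add_S_sub_one_eval_two_mul_cos_eq_zero (k := k) (by omega)
    push_cast
    rw [show (2 * (k : ℤ) + 1 - 2) / 2 = k - 1 by omega,
      show (2 * (k : ℤ) + 1 - 1) / 2 = k by omega, show (2 * (k : ℤ) + 1 - 3) / 2 = k - 1 by omega,
      show (2 * (k : ℤ) + 1) / 2 = k by omega]
    simp [h]

theorem reflection_mul_reflection_sq_eq_one (hf : f x = 2) (hg : g y = 2) (hfy : f y = 0)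
    (hgx : g x = 0) : (reflection hf * reflection hg) ^ 2 = 1 := by
  ext z
  simp only [pow_two, LinearEquiv.mul_apply, reflection_apply, map_sub, map_smul, hf, hg, hfy,
    hgx, LinearEquiv.coe_one, id_eq]
  module

end Module

namespace CoxeterMatrix

variable {S : Type*} (M : CoxeterMatrix S)

/-- The functional `v ↦ 2 B(αₛ, v)` of the Tits form `B(αₛ, αₜ) = -cos (π / m(s,t))`.
For `m(s,t) = 0`, encoding `∞`, the junk value `π / 0 = 0` gives the correct `B(αₛ, αₜ) = -1`. -/
noncomputable def corootForm (s : S) : Module.Dual ℝ (S →₀ ℝ) :=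
  Finsupp.linearCombination ℝ fun t => -2 * cos (π / M s t)

lemma corootForm_single (s t : S) (c : ℝ) :
    M.corootForm s (Finsupp.single t c) = c * (-2 * cos (π / M s t)) := by
  simp [corootForm]

lemma corootForm_single_self (s : S) : M.corootForm s (Finsupp.single s 1) = 2 := by
  simp [corootForm_single]

noncomputable def geometricReflection (s : S) : (S →₀ ℝ) ≃ₗ[ℝ] (S →₀ ℝ) :=
  Module.reflection (M.corootForm_single_self s)

lemma geometricReflection_apply (s : S) (v : S →₀ ℝ) :
    M.geometricReflection s v = v - M.corootForm s v • Finsupp.single s 1 :=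
  Module.reflection_apply _ _

lemma geometricReflection_single_self (s : S) :
    M.geometricReflection s (Finsupp.single s 1) = -Finsupp.single s 1 :=
  Module.reflection_apply_self _

lemma geometricReflection_apply_of_ne {s t : S} (h : t ≠ s) (v : S →₀ ℝ) :
    M.geometricReflection s v t = v t := by
  simp [geometricReflection_apply, h.symm]

lemma geometricReflection_apply_self (s : S) (v : S →₀ ℝ) :
    M.geometricReflection s v s = v s - M.corootForm s v := by
  simp [geometricReflection_apply]

theorem isLiftable_geometricReflection : M.IsLiftable M.geometricReflection := by
  intro s t
  by_cases hst : s = t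
  · subst hst
    rw [M.diagonal, pow_one]
    exact mul_eq_one_iff_eq_inv.mpr (Module.reflection_inv _).symm
  have hsym : M.corootForm t (Finsupp.single s 1) = M.corootForm s (Finsupp.single t 1) := by
    simp only [corootForm_single, M.symmetric]
  obtain h | h | h : M s t = 0 ∨ M s t = 2 ∨ 3 ≤ M s t := by
    have := M.off_diagonal s t hst
    omega
  · simp [h]
  · have h0 : M.corootForm s (Finsupp.single t 1) = 0 := by simp [corootForm_single, h]
    rw [h]
    exact Module.reflection_mul_reflection_sq_eq_one _ _ h0 (hsym.trans h0)
  · refine Module.reflection_mul_reflection_pow_eq_one _ _ h ?_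
    rw [hsym, corootForm_single]
    ring

theorem corootForm_lt (hM : ∀ s t : S, s ≠ t → M s t = 0 ∨ 3 ≤ M s t) {s t : S}
    {v : S →₀ ℝ} (hv : 0 ≤ v) (hts : t ≠ s) (hvt : v t ≠ 0) : M.corootForm s v < 2 * v s := by
  classical
  have herase : M.corootForm s (v.erase s) < 0 := by
    rw [corootForm, Finsupp.linearCombination_apply, Finsupp.sum]
    refine Finset.sum_neg (fun t' ht' => ?_) ⟨t, by simp [hts, hvt]⟩
    rw [Finsupp.support_erase, Finset.mem_erase, Finsupp.mem_support_iff] at ht'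
    rw [Finsupp.erase_ne ht'.1, smul_eq_mul]
    have hcos := cos_pi_div_natCast_pos (hM s t' (Ne.symm ht'.1))
    have hvt' := (Finsupp.le_def.1 hv t').lt_of_ne' ht'.2
    simp only [Finsupp.coe_zero, Pi.zero_apply] at hvt'
    nlinarith
  have hsplit : M.corootForm s v = 2 * v s + M.corootForm s (v.erase s) := by
    conv_lhs => rw [← Finsupp.single_add_erase s v]
    rw [map_add, corootForm_single, M.diagonal, Nat.cast_one, div_one, cos_pi]
    ring
  linarith

end CoxeterMatrix

namespace List

variable {α : Type*}

def IsPairWord [DecidableEq α] (l : List α) : Prop := ∀ x ∈ l, l.count x = 2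

def HasCrossing (l : List α) : Prop := ∃ a b, a ≠ b ∧ [a, b, a, b] <+ l

theorem exists_eq_append_cons_append_cons_of_not_nodup {l : List α} (h : ¬l.Nodup) :
    ∃ x l₁ m l₃, l = l₁ ++ x :: (m ++ x :: l₃) ∧ (x :: m).Nodup := by
  induction l with
  | nil => exact absurd nodup_nil h
  | cons z t ih =>
    by_cases ht : t.Nodup
    · obtain ⟨m, l₃, rfl⟩ := append_of_mem (by simpa [ht] using h : z ∈ t)
      exact ⟨z, [], m, l₃, rfl,
        (nodup_middle.1 ht).sublist ((sublist_append_left m l₃).cons_cons z)⟩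
    · obtain ⟨x, l₁, m, l₃, rfl, hm⟩ := ih ht
      exact ⟨x, z :: l₁, m, l₃, rfl, hm⟩

theorem not_cons_cons_cons_sublist_append_cons_cons {x b : α} {l₁ l₃ : List α}
    (hx : x ∉ l₁ ++ l₃) : ¬[x, b, x] <+ l₁ ++ x :: x :: l₃ := by
  intro h
  obtain ⟨p, q, hpq, hp, hq⟩ := sublist_append_iff.1 h
  rw [mem_append, not_or] at hx
  obtain rfl : p = [] := by
    rcases p with _ | ⟨c, p⟩
    · rfl
    · obtain ⟨rfl, -⟩ := cons_eq_cons.1 hpq.symm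
      exact absurd (hp.subset mem_cons_self) hx.1
  rw [nil_append] at hpq
  subst hpq
  exact hx.2 ((hq.drop 2).subset mem_cons_self)

theorem hasCrossing_append_cons_cons_iff {x : α} {l₁ l₃ : List α} (hx : x ∉ l₁ ++ l₃) :
    (l₁ ++ x :: x :: l₃).HasCrossing ↔ (l₁ ++ l₃).HasCrossing := by
  classical
  constructor
  · rintro ⟨a, b, hab, h⟩
    have ha : a ≠ x := by
      rintro rfl
      exact not_cons_cons_cons_sublist_append_cons_cons hx ((sublist_append_left _ [b]).trans h)
    have hb : b ≠ x := by
      rintro rfl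
      exact not_cons_cons_cons_sublist_append_cons_cons hx ((sublist_cons_self a _).trans h)
    have hfilter : ∀ l : List α, x ∉ l → l.filter (· ≠ x) = l := fun l hl =>
      filter_eq_self.2 fun c hc => by simpa using ne_of_mem_of_not_mem hc hl
    rw [mem_append, not_or] at hx
    have h' := h.filter (· ≠ x)
    rw [hfilter [a, b, a, b] (by simp [ha.symm, hb.symm]), filter_append, hfilter l₁ hx.1,
      filter_cons_of_neg (by simp), filter_cons_of_neg (by simp), hfilter l₃ hx.2] at h'
    exact ⟨a, b, hab, h'⟩
  · rintro ⟨a, b, hab, h⟩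
    exact ⟨a, b, hab, h.trans (by simp)⟩

section IsPairWord

variable [DecidableEq α]

theorem IsPairWord.of_append_cons_cons {x : α} {l₁ l₃ : List α}
    (hl : (l₁ ++ x :: x :: l₃).IsPairWord) : (l₁ ++ l₃).IsPairWord := by
  intro y hy
  have hc := hl y (by simp only [mem_append, mem_cons] at hy ⊢; tauto)
  rcases eq_or_ne y x with rfl | hyx
  · have := count_pos_iff.2 hy
    simp only [count_append, count_cons_self] at hc this
    omega
  · simpa [count_append, count_cons, Ne.symm hyx] using hc

theorem IsPairWord.exists_eq_append_cons_append_cons {l : List α} (hl : l.IsPairWord)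
    (hne : l ≠ []) :
    ∃ x l₁ m l₃, l = l₁ ++ x :: (m ++ x :: l₃) ∧ (x :: m).Nodup ∧ x ∉ l₁ ++ l₃ := by
  have hnd : ¬l.Nodup := fun hnd => by
    obtain ⟨x, hx⟩ := exists_mem_of_ne_nil l hne
    have := nodup_iff_count_le_one.1 hnd x
    rw [hl x hx] at this
    omega
  obtain ⟨x, l₁, m, l₃, rfl, hm⟩ := exists_eq_append_cons_append_cons_of_not_nodup hnd
  refine ⟨x, l₁, m, l₃, rfl, hm, fun hx => ?_⟩
  have h2 := hl x (by simp)
  have := count_pos_iff.2 hx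
  simp only [count_append, count_cons_self] at h2 this
  omega

theorem IsPairWord.hasCrossing {x y : α} {l₁ m l₃ : List α}
    (hl : (l₁ ++ x :: (y :: m ++ x :: l₃)).IsPairWord) (hm : (x :: y :: m).Nodup) :
    (l₁ ++ x :: (y :: m ++ x :: l₃)).HasCrossing := by
  simp only [nodup_cons, mem_cons, not_or] at hm
  obtain ⟨⟨hxy, -⟩, hym, -⟩ := hm
  have h2 := hl y (by simp)
  have hy : y ∈ l₁ ∨ y ∈ l₃ := by
    simp only [count_append, count_cons_self, count_cons_of_ne hxy, count_eq_zero.2 hym] at h2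
    rw [← count_pos_iff, ← count_pos_iff]
    omega
  rcases hy with hy | hy
  · exact ⟨y, x, Ne.symm hxy, (singleton_sublist.2 hy).append (by simp)⟩
  · exact ⟨x, y, hxy, (nil_sublist l₁).append (by simp [hy])⟩

end IsPairWord

theorem count_ofFn [DecidableEq α] {r : ℕ} (w : Fin r → α) (x : α) :
    (ofFn w).count x = Nat.card {j // w j = x} := by
  rw [← Multiset.coe_count, ← Fin.univ_val_map, Multiset.count_map, Nat.card_eq_fintype_card,
    Fintype.card_subtype]
  simp [Finset.card, Finset.filter_val, eq_comm]

theorem sublist_ofFn_iff {r : ℕ} (w : Fin r → α) (l : List α) :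
    l <+ ofFn w ↔ ∃ f : Fin l.length ↪o Fin r, ∀ i, l[i] = w (f i) := by
  rw [sublist_iff_exists_fin_orderEmbedding_get_eq]
  constructor
  · rintro ⟨f, hf⟩
    exact ⟨f.trans (Fin.castOrderIso length_ofFn).toOrderEmbedding,
      fun i => by simpa [Fin.cast] using hf i⟩
  · rintro ⟨f, hf⟩
    exact ⟨f.trans (Fin.castOrderIso length_ofFn).symm.toOrderEmbedding,
      fun i => by simpa using hf i⟩

theorem hasCrossing_ofFn_iff {r : ℕ} (w : Fin r → α) :
    (ofFn w).HasCrossing ↔ ∃ i k j l : Fin r, i < k ∧ k < j ∧ j < l ∧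
      w i = w j ∧ w k = w l ∧ w i ≠ w k := by
  simp only [HasCrossing, sublist_ofFn_iff]
  constructor
  · rintro ⟨a, b, hab, f, hf⟩
    have h0 : a = w (f 0) := hf 0
    have h1 : b = w (f 1) := hf 1
    have h2 : a = w (f 2) := hf 2
    have h3 : b = w (f 3) := hf 3
    exact ⟨f 0, f 1, f 2, f 3, f.strictMono (show (0 : Fin 4) < 1 by decide),
      f.strictMono (show (1 : Fin 4) < 2 by decide), f.strictMono (show (2 : Fin 4) < 3 by decide),
      h0 ▸ h2, h1 ▸ h3, h0 ▸ h1 ▸ hab⟩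
  · rintro ⟨i, k, j, l, hik, hkj, hjl, hij, hkl, hne⟩
    refine ⟨w i, w k, hne, OrderEmbedding.ofStrictMono ![i, k, j, l] ?_, ?_⟩
    · rw [Fin.strictMono_iff_lt_succ]
      intro t
      fin_cases t <;> assumption
    · intro t
      fin_cases t <;> simp [hij, hkl]

end List

namespace CoxeterSystem

variable {S W : Type*} [Group W] {M : CoxeterMatrix S} (cs : CoxeterSystem M W)

noncomputable def geometricRepresentation : W →* (S →₀ ℝ) ≃ₗ[ℝ] (S →₀ ℝ) :=
  cs.lift ⟨M.geometricReflection, M.isLiftable_geometricReflection⟩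

theorem geometricRepresentation_simple (s : S) :
    cs.geometricRepresentation (cs.simple s) = M.geometricReflection s :=
  cs.lift_apply_simple _ s

theorem geometricRepresentation_wordProd_apply_of_notMem {l : List S} {t : S} (ht : t ∉ l)
    (v : S →₀ ℝ) : cs.geometricRepresentation (cs.wordProd l) v t = v t := by
  induction l with
  | nil => simp
  | cons s l ih =>
    rw [List.mem_cons, not_or] at ht
    rw [wordProd_cons, map_mul, LinearEquiv.mul_apply, geometricRepresentation_simple,
      M.geometricReflection_apply_of_ne ht.1, ih ht.2]

theorem geometricRepresentation_wordProd_single_nonneg_and_pos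
    (hM : ∀ s t : S, s ≠ t → M s t = 0 ∨ 3 ≤ M s t) {x : S} {μ : List S} (hμ : (x :: μ).Nodup) :
    0 ≤ cs.geometricRepresentation (cs.wordProd μ) (Finsupp.single x 1) ∧
      ∀ y ∈ μ, 0 < cs.geometricRepresentation (cs.wordProd μ) (Finsupp.single x 1) y := by
  induction μ with
  | nil => simp
  | cons z μ ih =>
    simp only [List.nodup_cons, List.mem_cons, not_or] at hμ
    obtain ⟨⟨hxz, hxμ⟩, hzμ, hμ⟩ := hμ
    obtain ⟨hu, hpos⟩ := ih (List.nodup_cons.2 ⟨hxμ, hμ⟩)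
    set u := cs.geometricRepresentation (cs.wordProd μ) (Finsupp.single x 1)
    have hux : u x = 1 := by
      simp [u, cs.geometricRepresentation_wordProd_apply_of_notMem hxμ]
    have huz : u z = 0 := by
      simp [u, cs.geometricRepresentation_wordProd_apply_of_notMem hzμ, Ne.symm hxz]
    have hz : 0 < M.geometricReflection z u z := by
      have := M.corootForm_lt hM hu hxz (by simp [hux])
      rw [M.geometricReflection_apply_self, huz]
      linarith
    rw [wordProd_cons, map_mul, LinearEquiv.mul_apply, geometricRepresentation_simple]
    refine ⟨Finsupp.le_def.2 fun t => ?_, fun y hy => ?_⟩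
    · rcases eq_or_ne t z with rfl | htz
      · exact hz.le
      · rw [M.geometricReflection_apply_of_ne htz]
        exact Finsupp.le_def.1 hu t
    · rcases List.mem_cons.1 hy with rfl | hy
      · exact hz
      · rw [M.geometricReflection_apply_of_ne (ne_of_mem_of_not_mem hy hzμ)]
        exact hpos y hy

theorem wordProd_cons_append_cons_ne_one (hM : ∀ s t : S, s ≠ t → M s t = 0 ∨ 3 ≤ M s t)
    {x : S} {μ ν : List S} (hμ : (x :: μ).Nodup) (hμ₀ : μ ≠ []) (hν : x ∉ ν) :
    cs.wordProd (x :: (μ ++ x :: ν)) ≠ 1 := by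
  intro h1
  have hconj : cs.wordProd (x :: μ ++ [x]) = cs.wordProd ν.reverse := by
    rw [wordProd_reverse, eq_inv_iff_mul_eq_one, ← wordProd_append]
    simpa using h1
  obtain ⟨hu, hpos⟩ := cs.geometricRepresentation_wordProd_single_nonneg_and_pos hM hμ
  set u := cs.geometricRepresentation (cs.wordProd μ) (Finsupp.single x 1)
  have hux : u x = 1 := by
    simp [u, cs.geometricRepresentation_wordProd_apply_of_notMem (List.nodup_cons.1 hμ).1]
  obtain ⟨y, hy⟩ := List.exists_mem_of_ne_nil μ hμ₀
  have hlt := M.corootForm_lt hM hu (ne_of_mem_of_not_mem hy (List.nodup_cons.1 hμ).1)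
    (hpos y hy).ne'
  -- compare the `x`-coordinates of both sides of `hconj` applied to `αₓ`
  have key := congr_arg (fun w => cs.geometricRepresentation w (Finsupp.single x 1) x) hconj
  simp only [cs.geometricRepresentation_wordProd_apply_of_notMem (List.mem_reverse.not.2 hν)]
    at key
  rw [wordProd_append, wordProd_cons, wordProd_singleton, map_mul, map_mul, LinearEquiv.mul_apply,
    LinearEquiv.mul_apply, geometricRepresentation_simple, M.geometricReflection_single_self,
    map_neg, M.geometricReflection_apply_self, map_neg] at key
  simp only [Finsupp.neg_apply, Finsupp.single_eq_same] at key
  linarith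

theorem wordProd_append_cons_cons (l₁ l₃ : List S) (x : S) :
    cs.wordProd (l₁ ++ x :: x :: l₃) = cs.wordProd (l₁ ++ l₃) := by
  rw [wordProd_append, wordProd_cons, wordProd_cons, simple_mul_simple_cancel_left,
    ← wordProd_append]

theorem wordProd_eq_one_of_not_hasCrossing [DecidableEq S] {l : List S} (hl : l.IsPairWord)
    (hc : ¬l.HasCrossing) : cs.wordProd l = 1 := by
  rcases eq_or_ne l [] with rfl | hne
  · exact cs.wordProd_nil
  obtain ⟨x, l₁, m, l₃, rfl, hm, hx⟩ := hl.exists_eq_append_cons_append_cons hne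
  cases m with
  | nil =>
    rw [List.nil_append, wordProd_append_cons_cons]
    exact wordProd_eq_one_of_not_hasCrossing hl.of_append_cons_cons
      ((List.hasCrossing_append_cons_cons_iff hx).not.1 hc)
  | cons y m => exact absurd (hl.hasCrossing hm) hc
termination_by l.length
decreasing_by subst_vars; simp

theorem not_hasCrossing_of_wordProd_eq_one (hM : ∀ s t : S, s ≠ t → M s t = 0 ∨ 3 ≤ M s t)
    [DecidableEq S] {l : List S} (hl : l.IsPairWord) (h1 : cs.wordProd l = 1) :
    ¬l.HasCrossing := by
  intro hc
  have hne : l ≠ [] := by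
    rintro rfl
    obtain ⟨a, b, -, h⟩ := hc
    simp at h
  obtain ⟨x, l₁, m, l₃, rfl, hm, hx⟩ := hl.exists_eq_append_cons_append_cons hne
  cases m with
  | nil =>
    rw [List.nil_append, wordProd_append_cons_cons] at h1
    exact not_hasCrossing_of_wordProd_eq_one hM hl.of_append_cons_cons h1
      ((List.hasCrossing_append_cons_cons_iff hx).1 hc)
  | cons y m =>
    refine cs.wordProd_cons_append_cons_ne_one hM (ν := l₃ ++ l₁) hm (List.cons_ne_nil y m)
      (by simp only [List.mem_append] at hx ⊢; tauto) ?_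
    rw [wordProd_append, mul_eq_one_comm, ← wordProd_append] at h1
    simpa using h1
termination_by l.length
decreasing_by subst_vars; simp

theorem wordProd_eq_one_iff_not_hasCrossing (hM : ∀ s t : S, s ≠ t → M s t = 0 ∨ 3 ≤ M s t)
    [DecidableEq S] {l : List S} (hl : l.IsPairWord) : cs.wordProd l = 1 ↔ ¬l.HasCrossing :=
  ⟨cs.not_hasCrossing_of_wordProd_eq_one hM hl, cs.wordProd_eq_one_of_not_hasCrossing hl⟩

end CoxeterSystem

/-- Let `M` be a Coxeter matrix on `S` with `M s t ≥ 3` or `M s t = 0` (encoding `∞`) for all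
`s ≠ t`, with associated Coxeter system `(W, cs)`.  If the word `(w₁, …, w_r)` defines a pair
partition `V` (every nonempty fiber of `i ↦ w i` has exactly two elements), then
`w₁ ⋯ w_r = 1` in `W` if and only if `V` is non-crossing. -/
theorem wordProd_eq_one_iff_noncrossing {S : Type*}
    (M : CoxeterMatrix S) (hM : ∀ s t : S, s ≠ t → M s t = 0 ∨ 3 ≤ M s t)
    {W : Type*} [Group W] (cs : CoxeterSystem M W)
    {r : ℕ} (w : Fin r → S)
    (hpair : ∀ i, Nat.card {j : Fin r // w j = w i} = 2) :
    cs.wordProd (List.ofFn w) = 1 ↔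
      ¬ ∃ i k j l : Fin r, i < k ∧ k < j ∧ j < l ∧
        w i = w j ∧ w k = w l ∧ w i ≠ w k := by
  classical
  have hl : (List.ofFn w).IsPairWord := fun x hx => by
    obtain ⟨i, rfl⟩ := List.mem_ofFn.1 hx
    rw [List.count_ofFn, hpair i]
  rw [cs.wordProd_eq_one_iff_not_hasCrossing hM hl, List.hasCrossing_ofFn_iff]
end
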